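/- arXiv:1805.04131 — 2 statements merged into one kernel-verified Lean document; each statement's English description precedes it below -/
import Mathlib

section
/- If y ∈ P_HK and A, B are s-t cuts each having exactly one edge of y-value 1 in their boundary and all other boundary edges of y-value 0 (i.e., y(δ(A)) = y(δ(B)) = 1 with y integral on δ(A) and δ(B)), then A ⊆ B or B ⊆ A. -/
open Finset

variable {V E : Type*}

section Defs
variable [DecidableEq V] [Fintype E] [DecidableEq E]

/-- Edges of the cut `δ(C)`: edges with exactly one endpoint in `C`. -/
def cutE (f g : E → V) (C : Finset V) : Finset E :=
  Finset.univ.filter fun e => ¬((f e ∈ C) ↔ (g e ∈ C))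

/-- `y(δ(C))`, the total `y`-value of the cut `δ(C)`. -/
def cutVal (f g : E → V) (y : E → ℝ) (C : Finset V) : ℝ :=
  ∑ e ∈ cutE f g C, y e

/-- Degree of vertex `v` in the edge set `T`. -/
def degIn (f g : E → V) (T : Finset E) (v : V) : ℕ :=
  (T.filter fun e => f e = v ∨ g e = v).card

/-- `odd(T)`: vertices of odd degree with respect to `T`. -/
def oddVerts [Fintype V] (f g : E → V) (T : Finset E) : Finset V :=
  Finset.univ.filter fun v => Odd (degIn f g T v)

/-- Adjacency via an edge of `T`. -/
def adjIn (f g : E → V) (T : Finset E) (a b : V) : Prop :=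
  ∃ e ∈ T, (f e = a ∧ g e = b) ∨ (f e = b ∧ g e = a)

/-- `T` is a spanning tree: it connects all vertices and has `|V| - 1` edges. -/
def isSpanningTree [Fintype V] (f g : E → V) (T : Finset E) : Prop :=
  (∀ a b : V, Relation.ReflTransGen (adjIn f g T) a b) ∧
  T.card = Fintype.card V - 1

/-- Membership in the Held-Karp Path TSP polytope `P_HK` with endpoints `s`, `t`. -/
def memHK [Fintype V] (f g : E → V) (s t : V) (y : E → ℝ) : Prop :=
  (∀ e, 0 ≤ y e) ∧
  (∀ C : Finset V, C.Nonempty → C ≠ Finset.univ → (s ∈ C ↔ t ∈ C) →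
    2 ≤ cutVal f g y C) ∧
  (∀ C : Finset V, ¬(s ∈ C ↔ t ∈ C) → 1 ≤ cutVal f g y C) ∧
  (∀ v : V, v ≠ s → v ≠ t → cutVal f g y {v} = 2) ∧
  cutVal f g y {s} = 1 ∧ cutVal f g y {t} = 1

/-- `y` is `ℬ`-good: on each cut of the family, the load is at least `3`, or it is
exactly `1` with `y` integral on the cut. -/
def isGood (f g : E → V) (y : E → ℝ) (ℬ : Set (Finset V)) : Prop :=
  ∀ C ∈ ℬ, 3 ≤ cutVal f g y C ∨
    (cutVal f g y C = 1 ∧ ∀ e ∈ cutE f g C, y e = 0 ∨ y e = 1)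

/-- `E[W]`: edges with both endpoints in `W`. -/
def edgesIn (f g : E → V) (W : Finset V) : Finset E :=
  Finset.univ.filter fun e => f e ∈ W ∧ g e ∈ W

/-- Membership in the spanning tree polytope of the graph (Edmonds' description). -/
def memST [Fintype V] (f g : E → V) (x : E → ℝ) : Prop :=
  (∀ e, 0 ≤ x e) ∧
  (∑ e, x e) = (Fintype.card V : ℝ) - 1 ∧
  ∀ W : Finset V, W.Nonempty → ∑ e ∈ edgesIn f g W, x e ≤ (W.card : ℝ) - 1

/-- Membership in the spanning tree polytope of the induced subgraph `G[W]`,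
viewed in `ℝ^E` with coordinates outside `E[W]` equal to zero. -/
def memSTon (f g : E → V) (W : Finset V) (x : E → ℝ) : Prop :=
  (∀ e, 0 ≤ x e) ∧ (∀ e, e ∉ edgesIn f g W → x e = 0) ∧
  (∑ e ∈ edgesIn f g W, x e) = (W.card : ℝ) - 1 ∧
  ∀ S : Finset V, S ⊆ W → S.Nonempty → ∑ e ∈ edgesIn f g S, x e ≤ (S.card : ℝ) - 1

/-- Membership in the Held-Karp relaxation `P_HK(W, u, v)` for `u`-`v` Path TSP on the
induced subgraph `G[W]`, viewed in `ℝ^E` with coordinates outside `E[W]` equal to zero. -/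
def memHKon (f g : E → V) (W : Finset V) (u v : V) (x : E → ℝ) : Prop :=
  (∀ e, 0 ≤ x e) ∧
  (∀ e, e ∉ edgesIn f g W → x e = 0) ∧
  (∀ C : Finset V, C ⊆ W → C.Nonempty → C ≠ W → (u ∈ C ↔ v ∈ C) →
    2 ≤ cutVal f g x C) ∧
  (∀ C : Finset V, C ⊆ W → ¬(u ∈ C ↔ v ∈ C) → 1 ≤ cutVal f g x C) ∧
  (∀ w ∈ W, w ≠ u → w ≠ v → cutVal f g x {w} = 2) ∧
  (u ≠ v → cutVal f g x {u} = 1 ∧ cutVal f g x {v} = 1)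

end Defs



lemma cutVal_eq_sum_ite [DecidableEq V] [Fintype E] [DecidableEq E]
    (f g : E → V) (y : E → ℝ) (C : Finset V) :
    cutVal f g y C = ∑ e, if ¬((f e ∈ C) ↔ (g e ∈ C)) then y e else 0 := by
  rw [cutVal, cutE, Finset.sum_filter]

lemma posimodular [DecidableEq V] [Fintype E] [DecidableEq E]
    (f g : E → V) (y : E → ℝ) (hy : ∀ e, 0 ≤ y e) (A B : Finset V) :
    cutVal f g y (A \ B) + cutVal f g y (B \ A) ≤ cutVal f g y A + cutVal f g y B := by
  simp only [cutVal_eq_sum_ite, ← Finset.sum_add_distrib]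
  apply Finset.sum_le_sum
  intro e _
  have h0 := hy e
  by_cases h1 : f e ∈ A <;> by_cases h2 : g e ∈ A <;>
    by_cases h3 : f e ∈ B <;> by_cases h4 : g e ∈ B <;>
    simp [Finset.mem_sdiff, h1, h2, h3, h4] <;> linarith

/-- If `y ∈ P_HK` and `A`, `B` are `s`-`t` cuts each having `y`-load exactly
`1` with `y` integral on their boundaries, then `A ⊆ B` or `B ⊆ A`. -/
theorem stmt_6 [Fintype V] [DecidableEq V] [Fintype E] [DecidableEq E]
    (f g : E → V) (s t : V) (hst : s ≠ t) (y : E → ℝ) (hy : memHK f g s t y)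
    (A B : Finset V) (hsA : s ∈ A) (htA : t ∉ A) (hsB : s ∈ B) (htB : t ∉ B)
    (hA1 : cutVal f g y A = 1) (hAint : ∀ e ∈ cutE f g A, y e = 0 ∨ y e = 1)
    (hB1 : cutVal f g y B = 1) (hBint : ∀ e ∈ cutE f g B, y e = 0 ∨ y e = 1) :
    A ⊆ B ∨ B ⊆ A := by
  by_contra h
  push_neg at h
  obtain ⟨hAB, hBA⟩ := h
  obtain ⟨a, haA, haB⟩ := Finset.not_subset.mp hAB
  obtain ⟨b, hbB, hbA⟩ := Finset.not_subset.mp hBA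
  have hkey := posimodular f g y hy.1 A B
  have h2 := hy.2.1
  have hAB2 : 2 ≤ cutVal f g y (A \ B) := by
    apply h2
    · exact ⟨a, Finset.mem_sdiff.mpr ⟨haA, haB⟩⟩
    · intro hu
      have : s ∈ A \ B := hu ▸ Finset.mem_univ s
      simp [hsB] at this
    · simp [Finset.mem_sdiff, htA, hsB]
  have hBA2 : 2 ≤ cutVal f g y (B \ A) := by
    apply h2
    · exact ⟨b, Finset.mem_sdiff.mpr ⟨hbB, hbA⟩⟩
    · intro hu
      have : s ∈ B \ A := hu ▸ Finset.mem_univ s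
      simp [hsA] at this
    · simp [Finset.mem_sdiff, htB, hsA]
  linarith
end

section
/- The Held-Karp Path TSP polytope has the alternative description P_HK = {x ∈ ℝ^E_{≥0} : x ∈ P_ST, x(δ(v)) = 2 for v ∉ {s,t}, x(δ(s)) = x(δ(t)) = 1} (for s ≠ t), where P_ST is the spanning tree polytope of G. In particular every y ∈ P_HK lies in the spanning tree polytope of G. -/
open Finset

variable {V E : Type*}

section Aux
variable [Fintype V] [DecidableEq V] [Fintype E] [DecidableEq E]

lemma handshake (f g : E → V) (hloop : ∀ e, f e ≠ g e) (y : E → ℝ) (W : Finset V) :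
    ∑ v ∈ W, cutVal f g y {v} =
      2 * ∑ e ∈ edgesIn f g W, y e + cutVal f g y W := by
  have key : ∀ v : V, cutVal f g y {v} =
      ∑ e, ((if f e = v then y e else 0) + (if g e = v then y e else 0)) := by
    intro v
    rw [cutVal, cutE, Finset.sum_filter]
    refine Finset.sum_congr rfl fun e _ => ?_
    have h := hloop e
    by_cases hf : f e = v <;> by_cases hg : g e = v
    · exact absurd (hf.trans hg.symm) h
    · simp [hf, hg]
    · simp [hf, hg]
    · simp [hf, hg]
  calc ∑ v ∈ W, cutVal f g y {v}
      = ∑ e, ∑ v ∈ W, ((if f e = v then y e else 0) + (if g e = v then y e else 0)) := by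
        rw [Finset.sum_congr rfl fun v _ => key v, Finset.sum_comm]
    _ = ∑ e, ((if f e ∈ W then y e else 0) + (if g e ∈ W then y e else 0)) := by
        refine Finset.sum_congr rfl fun e _ => ?_
        rw [Finset.sum_add_distrib, Finset.sum_ite_eq W (f e) (fun _ => y e),
          Finset.sum_ite_eq W (g e) (fun _ => y e)]
    _ = 2 * ∑ e ∈ edgesIn f g W, y e + cutVal f g y W := by
        rw [cutVal, cutE, edgesIn, Finset.sum_filter, Finset.sum_filter,
          Finset.mul_sum, ← Finset.sum_add_distrib]
        refine Finset.sum_congr rfl fun e _ => ?_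
        by_cases hf : f e ∈ W <;> by_cases hg : g e ∈ W <;> simp [hf, hg] <;> ring

lemma cutE_compl (f g : E → V) (C : Finset V) : cutE f g Cᶜ = cutE f g C := by
  ext e; simp only [cutE, Finset.mem_filter, Finset.mem_univ, true_and, Finset.mem_compl]
  tauto

lemma cutVal_compl (f g : E → V) (y : E → ℝ) (C : Finset V) :
    cutVal f g y Cᶜ = cutVal f g y C := by
  rw [cutVal, cutVal, cutE_compl]

lemma cutVal_univ (f g : E → V) (y : E → ℝ) : cutVal f g y (Finset.univ : Finset V) = 0 := by
  rw [cutVal]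
  have : cutE f g (Finset.univ : Finset V) = ∅ := by
    ext e; simp [cutE]
  simp [this]

lemma edgesIn_univ (f g : E → V) : edgesIn f g (Finset.univ : Finset V) = Finset.univ := by
  ext e; simp [edgesIn]

lemma degsum (f g : E → V) (y : E → ℝ) (s t : V) (hst : s ≠ t)
    (h2 : ∀ v : V, v ≠ s → v ≠ t → cutVal f g y {v} = 2)
    (hs : cutVal f g y {s} = 1) (ht : cutVal f g y {t} = 1) (W : Finset V) :
    ∑ v ∈ W, cutVal f g y {v} =
      2 * (W.card : ℝ) - (if s ∈ W then (1:ℝ) else 0) - (if t ∈ W then (1:ℝ) else 0) := by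
  have key : ∀ v : V, cutVal f g y {v} =
      2 - (if v = s then (1:ℝ) else 0) - (if v = t then (1:ℝ) else 0) := by
    intro v
    by_cases h1 : v = s <;> by_cases h2' : v = t
    · exact absurd (h1.symm.trans h2') hst
    · simp [h1, h2', hs, hst]; norm_num
    · simp [h1, h2', ht, hst.symm]; norm_num
    · simp [h1, h2', h2 v h1 h2']
  rw [Finset.sum_congr rfl fun v _ => key v]
  rw [Finset.sum_sub_distrib, Finset.sum_sub_distrib, Finset.sum_const,
    Finset.sum_ite_eq' W s (fun _ => (1:ℝ)), Finset.sum_ite_eq' W t (fun _ => (1:ℝ))]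
  push_cast
  ring

end Aux

/-- The Held-Karp Path TSP polytope has the alternative description as
the set of points of the spanning tree polytope satisfying the degree constraints
`x(δ(v)) = 2` for `v ∉ {s,t}` and `x(δ(s)) = x(δ(t)) = 1`. In particular every
`y ∈ P_HK` lies in the spanning tree polytope of `G`. -/
theorem stmt_13 [Fintype V] [DecidableEq V] [Fintype E] [DecidableEq E]
    (f g : E → V) (hloop : ∀ e, f e ≠ g e) (s t : V) (hst : s ≠ t) (y : E → ℝ) :
    memHK f g s t y ↔
      (memST f g y ∧ (∀ v : V, v ≠ s → v ≠ t → cutVal f g y {v} = 2) ∧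
        cutVal f g y {s} = 1 ∧ cutVal f g y {t} = 1) := by
  constructor
  · rintro ⟨h0, hcut2, hcut1, hdeg, hs, ht⟩
    have hds := degsum f g y s t hst hdeg hs ht
    have hhs := handshake f g hloop y
    have htot : (∑ e, y e) = (Fintype.card V : ℝ) - 1 := by
      have h1 := hhs Finset.univ
      have h2 := hds Finset.univ
      rw [cutVal_univ, edgesIn_univ] at h1
      simp only [Finset.mem_univ, if_pos, Finset.card_univ] at h2
      linarith [h1.symm.trans h2]
    refine ⟨⟨h0, htot, fun W hWne => ?_⟩, hdeg, hs, ht⟩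
    by_cases hWu : W = Finset.univ
    · subst hWu
      rw [edgesIn_univ, htot, Finset.card_univ]
    · have h1 := hhs W
      have h2 := hds W
      have hcard : 1 ≤ (W.card : ℝ) := by
        exact_mod_cast Finset.card_pos.mpr hWne
      by_cases hsW : s ∈ W <;> by_cases htW : t ∈ W <;>
        simp only [hsW, htW, if_pos, if_neg, if_true, if_false] at h2
      · have hc := hcut2 W hWne hWu (by tauto)
        linarith [h1.symm.trans h2]
      · have hc := hcut1 W (by tauto)
        linarith [h1.symm.trans h2]
      · have hc := hcut1 W (by tauto)
        linarith [h1.symm.trans h2]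
      · have hc := hcut2 W hWne hWu (by tauto)
        linarith [h1.symm.trans h2]
  · rintro ⟨⟨h0, htot, hsub⟩, hdeg, hs, ht⟩
    have hds := degsum f g y s t hst hdeg hs ht
    have hhs := handshake f g hloop y
    -- helper: cuts avoiding both s and t have value ≥ 2
    have helper : ∀ C : Finset V, C.Nonempty → s ∉ C → t ∉ C → 2 ≤ cutVal f g y C := by
      intro C hCne hsC htC
      have h1 := hhs C
      have h2 := hds C
      simp only [hsC, htC, if_neg, if_false, not_false_iff] at h2
      have hc := hsub C hCne
      linarith [h1.symm.trans h2]
    refine ⟨h0, ?_, ?_, hdeg, hs, ht⟩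
    · intro C hCne hCu hstC
      by_cases hsC : s ∈ C
      · have htC : t ∈ C := hstC.mp hsC
        rw [← cutVal_compl]
        refine helper Cᶜ (Finset.nonempty_iff_ne_empty.mpr (by simpa [Finset.compl_eq_empty_iff] using hCu)) ?_ ?_ <;>
          simp [Finset.mem_compl, hsC, htC]
      · have htC : t ∉ C := fun h => hsC (hstC.mpr h)
        exact helper C hCne hsC htC
    · intro C hstC
      have h1 := hhs C
      have h2 := hds C
      by_cases hsC : s ∈ C <;> by_cases htC : t ∈ C <;>
        simp only [hsC, htC, if_pos, if_neg, if_true, if_false] at h2 ⊢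
      · exact absurd (by tauto) hstC
      · have hCne : C.Nonempty := ⟨s, hsC⟩
        have hc := hsub C hCne
        linarith [h1.symm.trans h2]
      · have hCne : C.Nonempty := ⟨t, htC⟩
        have hc := hsub C hCne
        linarith [h1.symm.trans h2]
      · exact absurd (by tauto) hstC
end
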